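/- Let ρ be a nonempty Cayley permutation and σ a ρ-minimal inversion sequence. Then |ρ| + mdd(ρ) ≤ |σ| ≤ |ρ| + 2·mdd(ρ); in particular |σ| ≤ 3|ρ| - 2. -/

import Mathlib

/-- `σ` is an inversion sequence: `σ_i ∈ {0,…,i-1}` (0-indexed: `σ[i] ≤ i`). -/
def IsInvSeq (σ : List ℕ) : Prop := ∀ i < σ.length, σ.getD i 0 ≤ i

/-- `σ` is a Cayley permutation: its value set is `{0,…,max σ}` (downward closed). -/
def IsCayley (σ : List ℕ) : Prop := ∀ v w : ℕ, w ∈ σ → v ≤ w → v ∈ σ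

/-- Maximum diagonal difference `max_i (σ_i - i + 1)` (0-indexed: `max_i (σ[i] - i)`). -/
def mdd (σ : List ℕ) : ℤ :=
  ((List.range σ.length).map (fun i => (σ.getD i 0 : ℤ) - i)).foldr max (-(σ.length : ℤ))

/-- `τ` and `σ` are order-isomorphic sequences of the same length. -/
def OrdIso (τ σ : List ℕ) : Prop :=
  τ.length = σ.length ∧ ∀ i j : ℕ, i < τ.length → j < τ.length →
    (τ.getD i 0 ≤ τ.getD j 0 ↔ σ.getD i 0 ≤ σ.getD j 0)

/-- `σ` contains the pattern `ρ` (i.e. `ρ ⪯ σ`): some subsequence of `σ` is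
order-isomorphic to `ρ`. -/
def ContainsPat (σ ρ : List ℕ) : Prop := ∃ τ : List ℕ, τ.Sublist σ ∧ OrdIso ρ τ

/-- The reduction of `σ`: the `j`-th smallest distinct value is replaced by `j-1`. -/
def red (σ : List ℕ) : List ℕ :=
  σ.map (fun v => (σ.toFinset.filter (fun w => w < v)).card)

/-- Number of distinct values of `σ`. -/
def distv (σ : List ℕ) : ℕ := σ.toFinset.card

/-- Positions (0-indexed) of saturated entries of `σ`. -/
def Sat (σ : List ℕ) : Set ℕ := {i | i < σ.length ∧ (σ.getD i 0 : ℤ) - i = mdd σ}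

/-- `σ` is a ρ-minimal inversion sequence: a minimal element, under pattern
containment, of the set of inversion sequences that are Cayley permutations and
contain `ρ`. -/
def IsMinimalFor (ρ σ : List ℕ) : Prop :=
  IsInvSeq σ ∧ IsCayley σ ∧ ContainsPat σ ρ ∧
  ∀ τ : List ℕ, IsInvSeq τ → IsCayley τ → ContainsPat τ ρ → ContainsPat σ τ → τ = σ

/-!
The lower bound holds for every inversion sequence `σ` containing `ρ`: along an occurrence
`f` of `ρ` in `σ`, `ρ_a ≤ σ_{f a} ≤ f a ≤ |σ| - |ρ| + a`.

For the upper bound, minimality says that deleting an entry outside the occurrence and reducing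
never yields an inversion sequence. This forces the deleted value to appear a second time and a
saturated entry `σ_i = i` to follow it. Counting positions and values below the last saturated
entry then bounds the number of entries outside the occurrence by `2 mdd ρ`. Finally
`mdd ρ ≤ |ρ| - 1`, since the values of a Cayley permutation lie below its length.
-/

open Finset

lemma Finset.card_image_eq_card_image {α β γ : Type*} [DecidableEq α] [DecidableEq β]
    [DecidableEq γ] {f : α → β} {g : α → γ} {s : Finset α}
    (h : ∀ i ∈ s, ∀ j ∈ s, f i = f j ↔ g i = g j) : #(s.image f) = #(s.image g) := by
  induction s using Finset.induction_on with
  | empty => simp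
  | insert a s ha ih =>
    have hmem : f a ∈ s.image f ↔ g a ∈ s.image g := by
      simp only [mem_image]
      exact exists_congr fun i ↦ and_congr_right fun hi ↦
        h i (mem_insert_of_mem hi) a (mem_insert_self a s)
    rw [image_insert, image_insert, card_insert_eq_ite, card_insert_eq_ite,
      ih fun i hi j hj ↦ h i (mem_insert_of_mem hi) j (mem_insert_of_mem hj)]
    simp only [hmem]

lemma List.foldr_max_le {α : Type*} [LinearOrder α] {l : List α} {b c : α} (hb : b ≤ c)
    (h : ∀ x ∈ l, x ≤ c) : l.foldr max b ≤ c := by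
  induction l with
  | nil => exact hb
  | cons a l ih => exact max_le (h a List.mem_cons_self) (ih fun x hx ↦ h x (.tail _ hx))

lemma List.getD_mem {α : Type*} {l : List α} {i : ℕ} (d : α) (hi : i < l.length) :
    l.getD i d ∈ l :=
  List.getD_eq_getElem _ _ hi ▸ List.getElem_mem hi

lemma List.getD_eraseIdx {α : Type*} (l : List α) (x i : ℕ) (d : α) :
    (l.eraseIdx x).getD i d = if i < x then l.getD i d else l.getD (i + 1) d := by
  simp only [List.getD_eq_getElem?_getD, List.getElem?_eraseIdx]
  split_ifs <;> rfl

lemma List.exists_getD_eq_of_mem_eraseIdx {α : Type*} {l : List α} {x : ℕ} {v : α} (d : α)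
    (hv : v ∈ l.eraseIdx x) : ∃ i < l.length, i ≠ x ∧ l.getD i d = v := by
  obtain ⟨i, hi, hix, rfl⟩ := List.mem_eraseIdx_iff_getElem.1 hv
  exact ⟨i, hi, hix, List.getD_eq_getElem _ _ hi⟩

lemma List.sublist_eraseIdx_of_getElem?_eq {α : Type*} {l l' : List α} (f : ℕ ↪o ℕ)
    (hf : ∀ a, l[a]? = l'[f a]?) {x : ℕ} (hx : ∀ a, f a ≠ x) : l.Sublist (l'.eraseIdx x) := by
  refine List.sublist_iff_exists_orderEmbedding_getElem?_eq.2
    ⟨OrderEmbedding.ofStrictMono (fun a ↦ if f a < x then f a else f a - 1) fun a b hab ↦ ?_,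
      fun a ↦ ?_⟩
  · have := f.strictMono hab
    have := hx a
    have := hx b
    dsimp only
    split_ifs <;> omega
  · have := hx a
    change l[a]? = (l'.eraseIdx x)[if f a < x then f a else f a - 1]?
    rw [hf, List.getElem?_eraseIdx]
    split_ifs <;> first | rfl | omega | (congr 1; omega)

def rank (s : List ℕ) (v : ℕ) : ℕ := #{u ∈ s.toFinset | u < v}

lemma red_eq_map_rank (s : List ℕ) : red s = s.map (rank s) := rfl

lemma rank_le_self (s : List ℕ) (v : ℕ) : rank s v ≤ v := by
  simpa [rank] using card_le_card (s := {u ∈ s.toFinset | u < v}) (t := range v)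
    fun u hu ↦ by simp_all

lemma rank_mono (s : List ℕ) : Monotone (rank s) := fun _ _ hvw ↦
  card_le_card <| monotone_filter_right _ fun _ _ hu ↦ hu.trans_le hvw

lemma rank_lt_rank {s : List ℕ} {v w : ℕ} (hv : v ∈ s) (hvw : v < w) : rank s v < rank s w :=
  card_lt_card <| (ssubset_iff_of_subset <| monotone_filter_right _ fun _ _ hu ↦ hu.trans hvw).2
    ⟨v, by simp [hv, hvw]⟩

lemma rank_le_rank_iff {s : List ℕ} {v w : ℕ} (hw : w ∈ s) : rank s v ≤ rank s w ↔ v ≤ w :=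
  ⟨fun h ↦ not_lt.1 fun hwv ↦ (rank_lt_rank hw hwv).not_ge h, fun h ↦ rank_mono s h⟩

lemma rank_lt_card {s : List ℕ} {v : ℕ} (hv : v ∈ s) : rank s v < #s.toFinset :=
  card_lt_card <| (ssubset_iff_of_subset <| filter_subset _ _).2 ⟨v, by simp [hv]⟩

lemma rank_le_rank_add_card_sdiff (s t : List ℕ) (v : ℕ) :
    rank s v ≤ rank t v + #(s.toFinset \ t.toFinset) := by
  refine (card_le_card fun u hu ↦ ?_).trans (card_union_le _ _)
  by_cases hut : u ∈ t <;> simp_all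

lemma IsCayley.rank_eq {s : List ℕ} (hs : IsCayley s) {v : ℕ} (hv : v ∈ s) : rank s v = v := by
  have : {u ∈ s.toFinset | u < v} = range v := by
    ext u
    simpa using fun huv : u < v ↦ hs u v hv huv.le
  rw [rank, this, card_range]

lemma isCayley_red (s : List ℕ) : IsCayley (red s) := by
  have himage : s.toFinset.image (rank s) = range #s.toFinset := by
    refine eq_of_subset_of_card_le (fun _ h ↦ ?_) ?_
    · obtain ⟨u, hu, rfl⟩ := mem_image.1 h
      exact mem_range.2 (rank_lt_card (List.mem_toFinset.1 hu))
    · rw [card_range, card_image_of_injOn fun u hu v hv huv ↦ ?_]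
      exact le_antisymm ((rank_le_rank_iff (List.mem_toFinset.1 hv)).1 huv.le)
        ((rank_le_rank_iff (List.mem_toFinset.1 hu)).1 huv.ge)
  intro v w hw hvw
  simp only [red_eq_map_rank, List.mem_map] at hw ⊢
  obtain ⟨u, hu, rfl⟩ := hw
  have : v ∈ s.toFinset.image (rank s) :=
    himage ▸ mem_range.2 (hvw.trans_lt (rank_lt_card hu))
  simpa using this

lemma rank_lt_self {s : List ℕ} {v w : ℕ} (hv : v ∉ s) (hvw : v < w) : rank s w < w := by
  simpa [rank] using card_lt_card (s := {u ∈ s.toFinset | u < w}) (t := range w)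
    ((ssubset_iff_of_subset fun u hu ↦ by simp_all).2 ⟨v, by simp [hvw], by simp [hv]⟩)

lemma rank_eq_card_image (s : List ℕ) (v : ℕ) :
    rank s v = #(((range s.length).filter fun i ↦ s.getD i 0 < v).image (s.getD · 0)) := by
  rw [rank]
  congr 1
  ext u
  simp only [mem_filter, List.mem_toFinset, mem_image, mem_range, List.mem_iff_getElem]
  constructor
  · rintro ⟨⟨i, hi, rfl⟩, hv⟩
    exact ⟨i, ⟨hi, by rwa [List.getD_eq_getElem _ _ hi]⟩, List.getD_eq_getElem _ _ hi⟩
  · rintro ⟨i, ⟨hi, hv⟩, rfl⟩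
    simp only [List.getD_eq_getElem _ _ hi] at hv ⊢
    exact ⟨⟨i, hi, rfl⟩, hv⟩

namespace OrdIso

variable {ρ τ υ : List ℕ}

lemma symm (h : OrdIso ρ τ) : OrdIso τ ρ :=
  ⟨h.1.symm, fun i j hi hj ↦ (h.2 i j (h.1 ▸ hi) (h.1 ▸ hj)).symm⟩

lemma trans (h : OrdIso ρ τ) (h' : OrdIso τ υ) : OrdIso ρ υ :=
  ⟨h.1.trans h'.1, fun i j hi hj ↦ (h.2 i j hi hj).trans (h'.2 i j (h.1 ▸ hi) (h.1 ▸ hj))⟩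

lemma getD_lt_getD_iff (h : OrdIso ρ τ) {i j : ℕ} (hi : i < ρ.length) (hj : j < ρ.length) :
    ρ.getD i 0 < ρ.getD j 0 ↔ τ.getD i 0 < τ.getD j 0 := by
  simpa only [not_le] using (h.2 j i hj hi).not

lemma getD_eq_getD_iff (h : OrdIso ρ τ) {i j : ℕ} (hi : i < ρ.length) (hj : j < ρ.length) :
    ρ.getD i 0 = ρ.getD j 0 ↔ τ.getD i 0 = τ.getD j 0 := by
  simp only [le_antisymm_iff, h.2 i j hi hj, h.2 j i hj hi]

lemma rank_getD_eq (h : OrdIso ρ τ) {a : ℕ} (ha : a < ρ.length) :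
    rank ρ (ρ.getD a 0) = rank τ (τ.getD a 0) := by
  have hfilter : ((range ρ.length).filter fun i ↦ ρ.getD i 0 < ρ.getD a 0) =
      (range τ.length).filter fun i ↦ τ.getD i 0 < τ.getD a 0 := by
    rw [← h.1]
    exact filter_congr fun i hi ↦ h.getD_lt_getD_iff (mem_range.1 hi) ha
  rw [rank_eq_card_image, rank_eq_card_image, hfilter]
  refine card_image_eq_card_image fun i hi j hj ↦ (h.symm.getD_eq_getD_iff ?_ ?_).symm <;>
    simp_all

end OrdIso

lemma ordIso_map_rank {s τ : List ℕ} (hτ : ∀ v ∈ τ, v ∈ s) : OrdIso (τ.map (rank s)) τ := by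
  refine ⟨List.length_map _, fun i j hi hj ↦ ?_⟩
  rw [List.getD_eq_getElem _ _ hi, List.getD_eq_getElem _ _ hj, List.getElem_map,
    List.getElem_map, rank_le_rank_iff (hτ _ (List.getElem_mem _))]
  simp only [List.length_map] at hi hj
  rw [List.getD_eq_getElem _ _ hi, List.getD_eq_getElem _ _ hj]

lemma ContainsPat.red {s ρ : List ℕ} (h : ContainsPat s ρ) : ContainsPat (red s) ρ := by
  obtain ⟨τ, hτ, hρτ⟩ := h
  exact ⟨τ.map (rank s), hτ.map _, hρτ.trans (ordIso_map_rank hτ.subset).symm⟩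

lemma containsPat_red_of_sublist {s σ : List ℕ} (h : s.Sublist σ) : ContainsPat σ (red s) :=
  ⟨s, h, ordIso_map_rank fun _ ↦ id⟩

lemma IsCayley.getD_eq_rank_of_ordIso {ρ τ : List ℕ} (hρ : IsCayley ρ) (h : OrdIso ρ τ)
    {a : ℕ} (ha : a < ρ.length) : ρ.getD a 0 = rank τ (τ.getD a 0) := by
  rw [← h.rank_getD_eq ha, hρ.rank_eq (List.getD_eq_getElem _ _ ha ▸ List.getElem_mem ha)]

lemma le_mdd {ρ : List ℕ} {a : ℕ} (ha : a < ρ.length) : (ρ.getD a 0 : ℤ) - a ≤ mdd ρ :=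
  List.le_max_of_le' _ (List.mem_map.2 ⟨a, List.mem_range.2 ha, rfl⟩) le_rfl

lemma mdd_le {ρ : List ℕ} {c : ℤ} (hc : -(ρ.length : ℤ) ≤ c)
    (h : ∀ a < ρ.length, (ρ.getD a 0 : ℤ) - a ≤ c) : mdd ρ ≤ c :=
  List.foldr_max_le hc <| by simpa using h

lemma IsCayley.mdd_le_length_sub_one {ρ : List ℕ} (hρ : IsCayley ρ) (hne : ρ ≠ []) :
    mdd ρ ≤ ρ.length - 1 := by
  have hpos := List.length_pos_iff.2 hne
  refine mdd_le (by omega) fun a ha ↦ ?_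
  have := hρ.rank_eq (List.getD_mem 0 ha) ▸ rank_lt_card (List.getD_mem 0 ha)
  have := ρ.toFinset_card_le
  omega

/-- Reducing never increases a value, so after deleting entry `x` only a later saturated entry
`σ_i = i`, now at position `i - 1`, can violate the condition; if the value `σ_x < i` disappears,
the rank of `i` drops to at most `i - 1`. -/
lemma IsInvSeq.red_eraseIdx {σ : List ℕ} (hσ : IsInvSeq σ) {x : ℕ} (hx : x < σ.length)
    (h : σ.getD x 0 ∉ σ.eraseIdx x ∨ ∀ i < σ.length, x < i → σ.getD i 0 ≠ i) :
    IsInvSeq (red (σ.eraseIdx x)) := by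
  intro i hi
  simp only [red_eq_map_rank, List.length_map] at hi ⊢
  rw [List.getD_eq_getElem _ _ (by simpa using hi), List.getElem_map,
    ← List.getD_eq_getElem _ 0 hi, List.getD_eraseIdx]
  rw [List.length_eraseIdx_of_lt hx] at hi
  split_ifs with hix
  · exact (rank_le_self _ _).trans (hσ i (by omega))
  rcases (hσ (i + 1) (by omega)).lt_or_eq with hlt | hsat
  · exact (rank_le_self _ _).trans (Nat.le_of_lt_succ hlt)
  rcases h with hunique | hunsat
  · rw [hsat]
    exact Nat.le_of_lt_succ (rank_lt_self hunique (by have := hσ x hx; omega))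
  · exact absurd hsat (hunsat _ (by omega) (by omega))

lemma IsInvSeq.exists_max_saturated {σ : List ℕ} (hσ : IsInvSeq σ) (hne : σ ≠ []) :
    ∃ L < σ.length, σ.getD L 0 = L ∧ ∀ i < σ.length, σ.getD i 0 = i → i ≤ L := by
  have hpos := List.length_pos_iff.2 hne
  have h0 : σ.getD 0 0 = 0 := Nat.le_zero.1 (hσ 0 hpos)
  exact ⟨Nat.findGreatest (fun m ↦ σ.getD m 0 = m) (σ.length - 1),
    (Nat.findGreatest_le _).trans_lt (by omega),
    Nat.findGreatest_spec (P := fun m ↦ σ.getD m 0 = m) (Nat.zero_le _) h0,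
    fun i hi hsat ↦ Nat.le_findGreatest (by omega) hsat⟩

lemma IsMinimalFor.mem_eraseIdx_and_exists_saturated {ρ σ : List ℕ} (hmin : IsMinimalFor ρ σ)
    {x : ℕ} (hx : x < σ.length) (hρ : ContainsPat (σ.eraseIdx x) ρ) :
    σ.getD x 0 ∈ σ.eraseIdx x ∧ ∃ i < σ.length, x < i ∧ σ.getD i 0 = i := by
  by_contra h
  have hinv : IsInvSeq (red (σ.eraseIdx x)) := hmin.1.red_eraseIdx hx <| by
    rw [not_and_or] at h
    push Not at h
    exact h
  have := congrArg List.length <| hmin.2.2.2 _ hinv (isCayley_red _) hρ.red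
    (containsPat_red_of_sublist (List.eraseIdx_sublist _ _))
  simp only [red_eq_map_rank, List.length_map, List.length_eraseIdx_of_lt hx] at this
  omega

section Occurrence

variable {α : Type*} {σ w : List α} {f : ℕ ↪o ℕ}

lemma lt_length_iff_of_getElem?_eq (hocc : ∀ a, w[a]? = σ[f a]?) {a : ℕ} :
    f a < σ.length ↔ a < w.length := by
  rw [← not_iff_not, not_lt, not_lt, ← List.getElem?_eq_none_iff, ← List.getElem?_eq_none_iff,
    hocc]

lemma getD_eq_getD_of_getElem?_eq (hocc : ∀ a, w[a]? = σ[f a]?) (a : ℕ) (d : α) :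
    w.getD a d = σ.getD (f a) d := by
  simp only [List.getD_eq_getElem?_getD, hocc]

lemma ne_of_mem_sdiff_image (hocc : ∀ a, w[a]? = σ[f a]?) {x : ℕ}
    (hx : x ∈ range σ.length \ (range w.length).image f) (a : ℕ) : f a ≠ x := by
  rintro rfl
  simp only [mem_sdiff, mem_range, mem_image, not_exists, not_and] at hx
  exact hx.2 a ((lt_length_iff_of_getElem?_eq hocc).1 hx.1) rfl

lemma card_sdiff_image_add_length (hocc : ∀ a, w[a]? = σ[f a]?) :
    #(range σ.length \ (range w.length).image f) + w.length = σ.length := by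
  have hsub : (range w.length).image f ⊆ range σ.length := image_subset_iff.2 fun a ha ↦
    mem_range.2 ((lt_length_iff_of_getElem?_eq hocc).2 (mem_range.1 ha))
  simpa [card_image_of_injective _ f.injective] using card_sdiff_add_card_eq_card hsub

lemma card_sdiff_image_add_le {j : ℕ} (hj : j < w.length)
    (hbelow : ∀ x ∈ range σ.length \ (range w.length).image f, x < f j) :
    #(range σ.length \ (range w.length).image f) + j ≤ f j := by
  have hdisj : Disjoint (range σ.length \ (range w.length).image f) ((range j).image f) :=
    sdiff_disjoint.mono_right (image_subset_image (range_subset_range.2 hj.le))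
  have hsub : (range σ.length \ (range w.length).image f) ∪ (range j).image f ⊆ range (f j) :=
    union_subset (fun x hx ↦ mem_range.2 (hbelow x hx))
      (image_subset_iff.2 fun a ha ↦ mem_range.2 (f.strictMono (mem_range.1 ha)))
  simpa [card_union_of_disjoint hdisj, card_image_of_injective _ f.injective]
    using card_le_card hsub

lemma two_mul_card_sdiff_le {σ w : List ℕ} (hocc : ∀ a, w[a]? = σ[f a]?)
    (hdup : ∀ x ∈ range σ.length \ (range w.length).image f, σ.getD x 0 ∈ σ.eraseIdx x) :
    2 * #(σ.toFinset \ w.toFinset) ≤ #(range σ.length \ (range w.length).image f) := by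
  set s := (range σ.length).filter fun x ↦ σ.getD x 0 ∉ w
  have hs : s ⊆ range σ.length \ (range w.length).image f := by
    intro x hx
    simp only [s, mem_filter, mem_sdiff, mem_image, mem_range] at hx ⊢
    refine ⟨hx.1, fun ⟨a, ha, hax⟩ ↦ hx.2 ?_⟩
    rw [← hax, ← getD_eq_getD_of_getElem?_eq hocc _ 0]
    exact List.getD_mem 0 ha
  refine (mul_card_image_le_card_of_maps_to (f := (σ.getD · 0)) (fun x hx ↦ ?_) 2
    fun v hv ↦ ?_).trans (card_le_card hs)
  · simp only [s, mem_filter, mem_range] at hx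
    simpa using ⟨List.getD_mem 0 hx.1, hx.2⟩
  · simp only [mem_sdiff, List.mem_toFinset] at hv
    obtain ⟨x, hx, rfl⟩ := List.getElem_of_mem hv.1
    rw [← List.getD_eq_getElem _ 0 hx] at hv ⊢
    have hxs : x ∈ s := by simpa [s] using ⟨hx, hv.2⟩
    obtain ⟨y, hy, hyx, hyv⟩ := List.exists_getD_eq_of_mem_eraseIdx 0 (hdup x (hs hxs))
    refine one_lt_card.2 ⟨y, ?_, x, ?_, hyx⟩ <;> simp_all [s]

end Occurrence

theorem IsInvSeq.length_add_mdd_le {ρ σ : List ℕ} (hσ : IsInvSeq σ) (hρ : IsCayley ρ)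
    (h : ContainsPat σ ρ) : (ρ.length : ℤ) + mdd ρ ≤ σ.length := by
  obtain ⟨w, hw, hiso⟩ := h
  obtain ⟨f, hocc⟩ := List.sublist_iff_exists_orderEmbedding_getElem?_eq.1 hw
  have hk : ρ.length = w.length := hiso.1
  have hkn := hw.length_le
  suffices mdd ρ ≤ σ.length - ρ.length by omega
  refine mdd_le (by omega) fun a ha ↦ ?_
  have hρw : ρ.getD a 0 ≤ w.getD a 0 :=
    (hρ.getD_eq_rank_of_ordIso hiso ha).trans_le (rank_le_self _ _)
  have hwσ : w.getD a 0 ≤ f a := getD_eq_getD_of_getElem?_eq hocc a 0 ▸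
    hσ _ ((lt_length_iff_of_getElem?_eq hocc).2 (by omega))
  have hgap : (w.length - 1 - a) + f a ≤ f (w.length - 1) := by
    simpa [Nat.sub_add_cancel (by omega : a ≤ w.length - 1)] using
      f.strictMono.add_le_nat (w.length - 1 - a) a
  have hlast : f (w.length - 1) < σ.length := (lt_length_iff_of_getElem?_eq hocc).2 (by omega)
  omega

/-- Let `L = f j` be the last saturated position and `D` the values of `σ` missing from the
occurrence `w`. Every position outside the occurrence is forced to lie before `L` and to carry a
repeated value, so counting the positions below `L` and the values below `σ_L = L` gives
`(|σ| - |ρ|) + j ≤ L ≤ ρ_j + |D| ≤ ρ_j + (|σ| - |ρ|) / 2`. -/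
theorem IsMinimalFor.length_le {ρ σ : List ℕ} (hρ : IsCayley ρ) (hmin : IsMinimalFor ρ σ) :
    (σ.length : ℤ) ≤ ρ.length + 2 * mdd ρ := by
  have ⟨hσ, hσC, ⟨w, hw, hiso⟩, _⟩ := hmin
  obtain ⟨f, hocc⟩ := List.sublist_iff_exists_orderEmbedding_getElem?_eq.1 hw
  rcases eq_or_ne σ [] with rfl | hne
  · obtain rfl : ρ = [] := List.eq_nil_of_length_eq_zero (hiso.1.trans (by simp_all))
    simp [mdd]
  obtain ⟨L, hLn, hLsat, hLmax⟩ := hσ.exists_max_saturated hne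
  set A := range σ.length \ (range w.length).image f
  have hforced (x : ℕ) (hx : x ∈ A) :
      σ.getD x 0 ∈ σ.eraseIdx x ∧ ∃ i < σ.length, x < i ∧ σ.getD i 0 = i :=
    hmin.mem_eraseIdx_and_exists_saturated (mem_range.1 (mem_sdiff.1 hx).1)
      ⟨w, List.sublist_eraseIdx_of_getElem?_eq f hocc (ne_of_mem_sdiff_image hocc hx), hiso⟩
  have hbelow (x : ℕ) (hx : x ∈ A) : x < L := by
    obtain ⟨i, hi, hxi, hsat⟩ := (hforced x hx).2
    exact hxi.trans_le (hLmax i hi hsat)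
  have hLocc : L ∈ (range w.length).image f := by
    by_contra hLA
    exact (hbelow L (mem_sdiff.2 ⟨mem_range.2 hLn, hLA⟩)).false
  obtain ⟨j, hj, rfl⟩ := mem_image.1 hLocc
  have hj' : j < ρ.length := hiso.1 ▸ mem_range.1 hj
  have hpositions := card_sdiff_image_add_le (mem_range.1 hj) hbelow
  have hvalues : f j ≤ ρ.getD j 0 + #(σ.toFinset \ w.toFinset) := calc
    f j = rank σ (f j) := (hσC.rank_eq (hLsat ▸ List.getD_mem 0 hLn)).symm
    _ ≤ rank w (f j) + #(σ.toFinset \ w.toFinset) := rank_le_rank_add_card_sdiff _ _ _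
    _ = ρ.getD j 0 + #(σ.toFinset \ w.toFinset) := by
      rw [hρ.getD_eq_rank_of_ordIso hiso hj', getD_eq_getD_of_getElem?_eq hocc _ 0, hLsat]
  have hrepeated := two_mul_card_sdiff_le hocc fun x hx ↦ (hforced x hx).1
  have hcard := card_sdiff_image_add_length hocc
  have hmdd := le_mdd hj'
  have hk : ρ.length = w.length := hiso.1
  omega

theorem stmt13 (ρ σ : List ℕ) (hρ : ρ ≠ []) (hC : IsCayley ρ)
    (hmin : IsMinimalFor ρ σ) :
    (ρ.length : ℤ) + mdd ρ ≤ (σ.length : ℤ) ∧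
    (σ.length : ℤ) ≤ (ρ.length : ℤ) + 2 * mdd ρ ∧
    (σ.length : ℤ) ≤ 3 * (ρ.length : ℤ) - 2 := by
  have hupper := hmin.length_le hC
  have hmdd := hC.mdd_le_length_sub_one hρ
  exact ⟨hmin.1.length_add_mdd_le hC hmin.2.2.1, hupper, by linarith⟩
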